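/- arXiv:1805.00746 — 2 statements merged into one kernel-verified Lean document; each statement's English description precedes it below -/
import Mathlib

section
/- (Segre type [(33)]) Let n = 3 with coordinates (u¹,u²,u³), and let U = {u ∈ ℝ³ : u² + u³ > 0}. Define the symmetric metric g by g₁₁ = 0, g₁₂ = 1, g₁₃ = 1, g₂₂ = −2u³, g₂₃ = u² + u³, g₃₃ = −2u²; then det g = 4(u² + u³) > 0 on U. Define c_{ijk} := (1/3)(∂_j g_{ik} − ∂_k g_{ij}) and the skew-symmetric field w by w₁₂ = w₃₁ = 0 and w₂₃ = 2/√(4u² + 4u³) (with w_{ji} = −w_{ij}, w_{ii} = 0). Then (g, c, w) satisfies conditions (cond1) on U. -/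
/-! The metric is affine in `u`, so `∂_k g_{ij}` is constant and so is `c`; explicitly
`c_{ijk} = a_i E_{jk}` with `a = (0, 1, -1)` and `E = e² ∧ e³`, while `w = f E` with
`f = (u² + u³)^(-1/2)`. Condition (1) follows from (3) and the symmetry of `g`, and (2) is built
into the definition of `c`. Because `c` and `w` are both multiples of `E`, (5) and (6) collapse to
the scalar identities `∂_l f = f (g⁻¹a)ˢ E_{sl}` and `aᵀ g⁻¹ a = -f²`, which follow from
`g⁻¹ a = (u² - u³, -1, 1) / (2(u² + u³))`. -/

open scoped BigOperators

/-- Partial derivative `∂_k f` in the `k`-th coordinate direction. -/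
noncomputable def pd {n : ℕ} (k : Fin n) (f : (Fin n → ℝ) → ℝ) (u : Fin n → ℝ) : ℝ :=
  fderiv ℝ f u (Pi.single k 1)

/-- Conditions (cond1) for a triple `(g, c, w)` on a set `U ⊆ ℝⁿ`:
`g` is the (lower-index) metric `g_{ij}`, `c` are the lowered coefficients `c_{ijk}`,
`w` is the skew-symmetric 2-form `w_{ij}`, and `c^s_{jk} := g^{si} c_{ijk}` is computed
via the pointwise inverse matrix `(g u)⁻¹`. -/
def Cond1 {n : ℕ} (U : Set (Fin n → ℝ))
    (g : (Fin n → ℝ) → Matrix (Fin n) (Fin n) ℝ)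
    (c : (Fin n → ℝ) → Fin n → Fin n → Fin n → ℝ)
    (w : (Fin n → ℝ) → Matrix (Fin n) (Fin n) ℝ) : Prop :=
  ∀ u ∈ U,
    (∀ i j k, pd k (fun x => g x i j) u + c u i j k + c u j i k = 0) ∧
    (∀ i j k, c u i j k + c u i k j = 0) ∧
    (∀ i j k, pd k (fun x => g x i j) u + pd i (fun x => g x j k) u
        + pd j (fun x => g x k i) u = 0) ∧
    (∀ i j, w u i j + w u j i = 0) ∧
    (∀ i j l, pd l (fun x => w x i j) u
        = ∑ s, (∑ a, (g u)⁻¹ s a * c u a i j) * w u s l) ∧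
    (∀ m l p k, pd k (fun x => c x p m l) u
        + ∑ s, (∑ a, (g u)⁻¹ s a * c u a m l) * c u s p k + w u m l * w u p k = 0)

open Matrix

section PartialDerivative

variable {n : ℕ}

lemma pd_eq_of_hasFDerivAt {f : (Fin n → ℝ) → ℝ} {f' : (Fin n → ℝ) →L[ℝ] ℝ} {u : Fin n → ℝ}
    (h : HasFDerivAt f f' u) (k : Fin n) : pd k f u = f' (Pi.single k 1) := by
  rw [pd, h.fderiv]

lemma pd_const (k : Fin n) (b : ℝ) (u : Fin n → ℝ) : pd k (fun _ => b) u = 0 := by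
  simp [pd]

lemma pd_mul_const (k : Fin n) (f : (Fin n → ℝ) → ℝ) (b : ℝ) (u : Fin n → ℝ) :
    pd k (fun x => f x * b) u = pd k f u * b := by
  have : (fun x => f x * b) = b • f := funext fun x => mul_comm (f x) b
  rw [pd, this, fderiv_const_smul_field, pd]
  simp [mul_comm]

lemma pd_const_add_dotProduct (k : Fin n) (b : ℝ) (α u : Fin n → ℝ) :
    pd k (fun x => b + x ⬝ᵥ α) u = α k := by
  have hlin : HasFDerivAt (fun x : Fin n → ℝ => x ⬝ᵥ α)
      (∑ m, α m • ContinuousLinearMap.proj (R := ℝ) (φ := fun _ : Fin n => ℝ) m) u := by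
    simp only [dotProduct]
    exact HasFDerivAt.fun_sum fun m _ => by
      simpa [mul_comm] using (hasFDerivAt_apply m u).const_mul (α m)
  rw [pd_eq_of_hasFDerivAt (hlin.const_add b)]
  simp [Pi.single_apply]

lemma pd_apply_of_affine {g : (Fin n → ℝ) → Matrix (Fin n) (Fin n) ℝ} {A : Matrix (Fin n) (Fin n) ℝ}
    {G : Fin n → Matrix (Fin n) (Fin n) ℝ} (hg : ∀ x, g x = A + ∑ m, x m • G m)
    (k i j : Fin n) (u : Fin n → ℝ) : pd k (fun x => g x i j) u = G k i j := by
  have : (fun x => g x i j) = fun x => A i j + x ⬝ᵥ fun m => G m i j := by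
    funext x
    simp [hg, Matrix.sum_apply, dotProduct]
  rw [this, pd_const_add_dotProduct]

lemma pd_comp_of_hasDerivAt {φ : ℝ → ℝ} {φ' : ℝ} {h : (Fin n → ℝ) → ℝ} {u : Fin n → ℝ}
    (hφ : HasDerivAt φ φ' (h u)) (hh : DifferentiableAt ℝ h u) (k : Fin n) :
    pd k (fun x => φ (h x)) u = φ' * pd k h u := by
  rw [← Function.comp_def, pd_eq_of_hasFDerivAt (hφ.comp_hasFDerivAt u hh.hasFDerivAt), pd]
  simp

end PartialDerivative

section MetricCoeffs

variable {n : ℕ}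

noncomputable def metricCoeffs (g : (Fin n → ℝ) → Matrix (Fin n) (Fin n) ℝ) (u : Fin n → ℝ)
    (i j k : Fin n) : ℝ :=
  (1 / 3) * (pd j (fun x => g x i k) u - pd k (fun x => g x i j) u)

lemma metricCoeffs_add_swap (g : (Fin n → ℝ) → Matrix (Fin n) (Fin n) ℝ) (u : Fin n → ℝ)
    (i j k : Fin n) : metricCoeffs g u i j k + metricCoeffs g u i k j = 0 := by
  simp only [metricCoeffs]
  ring

lemma pd_add_metricCoeffs_add_metricCoeffs {g : (Fin n → ℝ) → Matrix (Fin n) (Fin n) ℝ}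
    (hg : ∀ x, (g x).IsSymm) {u : Fin n → ℝ} {i j k : Fin n}
    (hcyc : pd k (fun x => g x i j) u + pd i (fun x => g x j k) u
        + pd j (fun x => g x k i) u = 0) :
    pd k (fun x => g x i j) u + metricCoeffs g u i j k + metricCoeffs g u j i k = 0 := by
  have hswap : ∀ a b, (fun x => g x a b) = fun x => g x b a :=
    fun a b => funext fun x => (hg x).apply b a
  simp only [metricCoeffs, hswap j i, hswap k i] at hcyc ⊢
  linarith

end MetricCoeffs

section RankOne

variable {n : ℕ} {a : Fin n → ℝ} {E ginv : Matrix (Fin n) (Fin n) ℝ}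

lemma pd_smul_apply_eq_sum {f : (Fin n → ℝ) → ℝ} {u : Fin n → ℝ}
    (hf : ∀ l, pd l f u = f u * ∑ s, (ginv *ᵥ a) s * E s l) (i j l : Fin n) :
    pd l (fun x => (f x • E) i j) u = ∑ s, (∑ b, ginv s b * (a b * E i j)) * (f u • E) s l := by
  have hcol : ∀ s, ∑ b, ginv s b * (a b * E i j) = (ginv *ᵥ a) s * E i j := fun s => by
    simp only [mulVec, dotProduct, Finset.sum_mul, mul_assoc]
  simp only [Matrix.smul_apply, smul_eq_mul, pd_mul_const, hf, hcol, Finset.mul_sum,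
    Finset.sum_mul]
  exact Finset.sum_congr rfl fun s _ => by ring

lemma sum_mul_add_smul_mul_smul_eq_zero {t : ℝ} (h : a ⬝ᵥ (ginv *ᵥ a) = -t ^ 2) (m l p k : Fin n) :
    ∑ s, (∑ b, ginv s b * (a b * E m l)) * (a s * E p k) + (t • E) m l * (t • E) p k = 0 := by
  have hsum : ∑ s, (∑ b, ginv s b * (a b * E m l)) * (a s * E p k)
      = a ⬝ᵥ (ginv *ᵥ a) * E m l * E p k := by
    simp only [mulVec, dotProduct, Finset.sum_mul, Finset.mul_sum]
    exact Finset.sum_congr rfl fun s _ => Finset.sum_congr rfl fun b _ => by ring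
  rw [hsum, h, Matrix.smul_apply, Matrix.smul_apply, smul_eq_mul, smul_eq_mul]
  ring

end RankOne

namespace Segre33

def metric (u : Fin 3 → ℝ) : Matrix (Fin 3) (Fin 3) ℝ :=
  !![0, 1, 1;
     1, -(2 * u 2), u 1 + u 2;
     1, u 1 + u 2, -(2 * u 1)]

def metricSlope : Fin 3 → Matrix (Fin 3) (Fin 3) ℝ :=
  ![0, !![0, 0, 0; 0, 0, 1; 0, 1, -2], !![0, 0, 0; 0, -2, 1; 0, 1, 0]]

def E : Matrix (Fin 3) (Fin 3) ℝ := !![0, 0, 0; 0, 0, 1; 0, -1, 0]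

def a : Fin 3 → ℝ := ![0, 1, -1]

noncomputable def coeff (u : Fin 3 → ℝ) : ℝ := 2 / √(4 * u 1 + 4 * u 2)

lemma metric_isSymm (u : Fin 3 → ℝ) : (metric u).IsSymm := by
  ext i j
  fin_cases i <;> fin_cases j <;> simp [metric]

lemma det_metric (u : Fin 3 → ℝ) : (metric u).det = 4 * (u 1 + u 2) := by
  simp only [metric, det_fin_three, of_apply, cons_val', cons_val_zero, cons_val_one, cons_val,
    cons_val_fin_one]
  ring

lemma metric_eq_add_sum (x : Fin 3 → ℝ) : metric x = metric 0 + ∑ m, x m • metricSlope m := by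
  ext i j
  fin_cases i <;> fin_cases j <;> simp [metric, metricSlope, Fin.sum_univ_three] <;> ring

lemma pd_metric (k i j : Fin 3) (u : Fin 3 → ℝ) :
    pd k (fun x => metric x i j) u = metricSlope k i j :=
  pd_apply_of_affine metric_eq_add_sum k i j u

lemma pd_metric_cyclic (u : Fin 3 → ℝ) (i j k : Fin 3) :
    pd k (fun x => metric x i j) u + pd i (fun x => metric x j k) u
      + pd j (fun x => metric x k i) u = 0 := by
  simp only [pd_metric]
  fin_cases i <;> fin_cases j <;> fin_cases k <;> norm_num [metricSlope]

lemma metricCoeffs_metric (u : Fin 3 → ℝ) (i j k : Fin 3) :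
    metricCoeffs metric u i j k = a i * E j k := by
  simp only [metricCoeffs, pd_metric]
  fin_cases i <;> fin_cases j <;> fin_cases k <;> norm_num [metricSlope, a, E]

lemma E_add_E_swap (i j : Fin 3) : E i j + E j i = 0 := by
  fin_cases i <;> fin_cases j <;> norm_num [E]

lemma coeff_smul_E (u : Fin 3 → ℝ) :
    coeff u • E = !![0, 0, 0;
                     0, 0, 2 / √(4 * u 1 + 4 * u 2);
                     0, -(2 / √(4 * u 1 + 4 * u 2)), 0] := by
  ext i j
  fin_cases i <;> fin_cases j <;> simp [coeff, E]

lemma inv_metric_mulVec_a {u : Fin 3 → ℝ} (hu : 0 < u 1 + u 2) :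
    (metric u)⁻¹ *ᵥ a = (2 * (u 1 + u 2))⁻¹ • ![u 1 - u 2, -1, 1] := by
  have hdet : IsUnit (metric u).det := by
    rw [det_metric]
    exact (by positivity : 4 * (u 1 + u 2) ≠ 0).isUnit
  have hsol : metric u *ᵥ ((2 * (u 1 + u 2))⁻¹ • ![u 1 - u 2, -1, 1]) = a := by
    ext i
    fin_cases i <;> simp [metric, a, mulVec, dotProduct, Fin.sum_univ_three] <;> field_simp <;> ring
  rw [← hsol, mulVec_mulVec, nonsing_inv_mul _ hdet, one_mulVec]

lemma pd_coeff {u : Fin 3 → ℝ} (hu : 0 < u 1 + u 2) (l : Fin 3) :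
    pd l coeff u = -coeff u / (2 * (u 1 + u 2)) * ![0, 1, 1] l := by
  have ht : 0 < 4 * u 1 + 4 * u 2 := by linarith
  have hsqrt : √(4 * u 1 + 4 * u 2) ≠ 0 := (Real.sqrt_pos.2 ht).ne'
  have hchain := pd_comp_of_hasDerivAt (φ := fun y => 2 / √y)
    (h := fun x => 4 * x 1 + 4 * x 2)
    ((hasDerivAt_const _ (2 : ℝ)).div (Real.hasDerivAt_sqrt ht.ne') hsqrt) (by fun_prop) l
  have hlin : (fun x : Fin 3 → ℝ => 4 * x 1 + 4 * x 2) = fun x => 0 + x ⬝ᵥ ![0, 4, 4] := by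
    funext x
    simp only [dotProduct, Fin.sum_univ_three, cons_val_zero, cons_val_one, cons_val]
    ring
  rw [hlin, pd_const_add_dotProduct, Real.sq_sqrt ht.le] at hchain
  rw [show coeff = fun x => 2 / √(4 * x 1 + 4 * x 2) from rfl, hchain]
  fin_cases l <;> simp <;> field_simp

lemma pd_coeff_eq_sum {u : Fin 3 → ℝ} (hu : 0 < u 1 + u 2) (l : Fin 3) :
    pd l coeff u = coeff u * ∑ s, ((metric u)⁻¹ *ᵥ a) s * E s l := by
  rw [pd_coeff hu, inv_metric_mulVec_a hu]
  fin_cases l <;> simp [E, Fin.sum_univ_three] <;> field_simp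

lemma a_dotProduct_inv_metric_mulVec_a {u : Fin 3 → ℝ} (hu : 0 < u 1 + u 2) :
    a ⬝ᵥ ((metric u)⁻¹ *ᵥ a) = -coeff u ^ 2 := by
  rw [inv_metric_mulVec_a hu, coeff, div_pow, Real.sq_sqrt (by linarith)]
  simp only [a, dotProduct, Fin.sum_univ_three, Pi.smul_apply, smul_eq_mul, cons_val_zero,
    cons_val_one, cons_val]
  field_simp
  ring

end Segre33

/-- Segre type [(33)]. With `(u¹,u²,u³) = (u 0, u 1, u 2)` and
`U = {u : u² + u³ > 0}`, the metric `g = !![0,1,1; 1,−2u³,u²+u³; 1,u²+u³,−2u²]`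
(with `det g = 4(u²+u³) > 0` on `U`), `c_{ijk} = (1/3)(∂_j g_{ik} − ∂_k g_{ij})` and the
skew form with `w₁₂ = w₃₁ = 0`, `w₂₃ = 2/√(4u² + 4u³)` satisfy (cond1) on `U`. -/
theorem segre_33_satisfies_cond1
    (U : Set (Fin 3 → ℝ)) (hU : U = {u | 0 < u 1 + u 2})
    (g : (Fin 3 → ℝ) → Matrix (Fin 3) (Fin 3) ℝ)
    (hg : g = fun u => !![0, 1, 1;
                          1, -(2 * u 2), u 1 + u 2;
                          1, u 1 + u 2, -(2 * u 1)])
    (c : (Fin 3 → ℝ) → Fin 3 → Fin 3 → Fin 3 → ℝ)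
    (hc : c = fun u i j k =>
      (1 / 3) * (pd j (fun x => g x i k) u - pd k (fun x => g x i j) u))
    (w : (Fin 3 → ℝ) → Matrix (Fin 3) (Fin 3) ℝ)
    (hw : w = fun u =>
      !![0, 0, 0;
         0, 0, 2 / Real.sqrt (4 * u 1 + 4 * u 2);
         0, -(2 / Real.sqrt (4 * u 1 + 4 * u 2)), 0]) :
    (∀ u ∈ U, (g u).det = 4 * (u 1 + u 2) ∧ 0 < (g u).det) ∧
    Cond1 U g c w := by
  obtain rfl : g = Segre33.metric := hg
  obtain rfl : c = metricCoeffs Segre33.metric := hc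
  obtain rfl : w = fun u => Segre33.coeff u • Segre33.E := by
    simp only [hw, Segre33.coeff_smul_E]
  subst hU
  refine ⟨fun u (hu : 0 < u 1 + u 2) => ⟨Segre33.det_metric u, ?_⟩,
    fun u (hu : 0 < u 1 + u 2) => ⟨fun i j k => ?_, metricCoeffs_add_swap _ u,
      Segre33.pd_metric_cyclic u, fun i j => ?_, fun i j l => ?_, fun m l p k => ?_⟩⟩
  · rw [Segre33.det_metric]
    positivity
  · exact pd_add_metricCoeffs_add_metricCoeffs Segre33.metric_isSymm
      (Segre33.pd_metric_cyclic u i j k)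
  · simp only [Matrix.smul_apply, smul_eq_mul, ← mul_add, Segre33.E_add_E_swap, mul_zero]
  · simpa only [Segre33.metricCoeffs_metric] using
      pd_smul_apply_eq_sum (Segre33.pd_coeff_eq_sum hu) i j l
  · simp only [Segre33.metricCoeffs_metric, pd_const, zero_add]
    exact sum_mul_add_smul_mul_smul_eq_zero (Segre33.a_dotProduct_inv_metric_mulVec_a hu) m l p k
end

section
/- Let U ⊆ ℝⁿ be open, let c^s_{ij} : U → ℝ (i,j,s ∈ {1,…,n}) be continuously differentiable functions, and let w_{ij} : U → ℝ be twice continuously differentiable functions satisfying the linear system ∂_l w_{ij} = c^s_{ij} w_{sl} for all i,j,l ∈ {1,…,n} (summation over the repeated index s). Then the compatibility conditions ∂_k ∂_l w_{ij} = ∂_l ∂_k w_{ij} force, for all indices i,j,k,s ∈ {1,…,n}: (∂_k c^p_{ij} − c^q_{ij} c^p_{qk}) w_{ps} = (∂_s c^p_{ij} − c^q_{ij} c^p_{qs}) w_{pk} (summation over the repeated indices p and q). -/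
open scoped BigOperators

/-!
Differentiating `∂_l w_{ij} = c^p_{ij} w_{pl}` once more and using the system again gives
`∂_k ∂_l w_{ij} = ∂_k c^p_{ij} w_{pl} + c^q_{ij} c^p_{ql} w_{pk}`. Equating the two mixed partials
`∂_k ∂_s w_{ij} = ∂_s ∂_k w_{ij}` (Schwarz) and moving the quadratic terms across yields the system.
-/

open Filter Topology

section PartialDerivative

variable {n : ℕ} {u : Fin n → ℝ}

theorem pd_congr_of_eventuallyEq {f g : (Fin n → ℝ) → ℝ} (h : f =ᶠ[𝓝 u] g) (k : Fin n) :
    pd k f u = pd k g u := by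
  rw [pd, pd, h.fderiv_eq]

theorem pd_mul {f g : (Fin n → ℝ) → ℝ} (hf : DifferentiableAt ℝ f u)
    (hg : DifferentiableAt ℝ g u) (k : Fin n) :
    pd k (fun x => f x * g x) u = pd k f u * g u + f u * pd k g u := by
  simp only [pd, fderiv_fun_mul hf hg, add_apply, smul_apply, smul_eq_mul]
  ring

theorem pd_sum {ι : Type*} (t : Finset ι) {F : ι → (Fin n → ℝ) → ℝ}
    (hF : ∀ p ∈ t, DifferentiableAt ℝ (F p) u) (k : Fin n) :
    pd k (fun x => ∑ p ∈ t, F p x) u = ∑ p ∈ t, pd k (F p) u := by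
  simp [pd, fderiv_fun_sum hF]

theorem pd_pd_comm {f : (Fin n → ℝ) → ℝ} (hf : ContDiffAt ℝ 2 f u) (k l : Fin n) :
    pd k (fun x => pd l f x) u = pd l (fun x => pd k f x) u := by
  have hsymm := hf.isSymmSndFDerivAt (by simp [minSmoothness_of_isRCLikeNormedField])
  have hdf : DifferentiableAt ℝ (fderiv ℝ f) u :=
    (hf.fderiv_right (m := 1) (by norm_num)).differentiableAt one_ne_zero
  have hpd_pd : ∀ a b : Fin n,
      pd a (fun x => pd b f x) u = fderiv ℝ (fderiv ℝ f) u (Pi.single a 1) (Pi.single b 1) := by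
    intro a b
    simp [pd, fderiv_clm_apply hdf (differentiableAt_const _)]
  rw [hpd_pd, hpd_pd, hsymm]

theorem pd_pd_of_eventually_pd_eq
    {c : (Fin n → ℝ) → Fin n → Fin n → Fin n → ℝ} {w : (Fin n → ℝ) → Matrix (Fin n) (Fin n) ℝ}
    (hc : ∀ s i j, DifferentiableAt ℝ (fun x => c x s i j) u)
    (hw : ∀ i j, DifferentiableAt ℝ (fun x => w x i j) u)
    (hlin : ∀ᶠ x in 𝓝 u, ∀ i j l, pd l (fun y => w y i j) x = ∑ s, c x s i j * w x s l)
    (i j k l : Fin n) :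
    pd k (fun x => pd l (fun y => w y i j) x) u
      = ∑ p, pd k (fun x => c x p i j) u * w u p l
        + ∑ p, ∑ q, c u q i j * c u p q l * w u p k := by
  have hpd_eq : (fun x => pd l (fun y => w y i j) x) =ᶠ[𝓝 u]
      fun x => ∑ p, c x p i j * w x p l := hlin.mono fun x hx => hx i j l
  have hquad : ∑ p, c u p i j * pd k (fun x => w x p l) u
      = ∑ p, ∑ q, c u q i j * c u p q l * w u p k := by
    simp only [hlin.self_of_nhds, Finset.mul_sum]
    rw [Finset.sum_comm]
    exact Fintype.sum_congr _ _ fun p => Fintype.sum_congr _ _ fun q => by ring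
  rw [pd_congr_of_eventuallyEq hpd_eq, pd_sum _ fun p _ => (hc p i j).fun_mul (hw p l),
    ← hquad, ← Finset.sum_add_distrib]
  exact Fintype.sum_congr _ _ fun p => pd_mul (hc p i j) (hw p l) k

end PartialDerivative

/-- if `w_{ij}` (C²) satisfies the linear system `∂_l w_{ij} = c^s_{ij} w_{sl}`
with `c^s_{ij}` of class C¹, then the compatibility conditions
`∂_k ∂_l w_{ij} = ∂_l ∂_k w_{ij}` force the linear algebraic system
`(∂_k c^p_{ij} − c^q_{ij} c^p_{qk}) w_{ps} = (∂_s c^p_{ij} − c^q_{ij} c^p_{qs}) w_{pk}`. -/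
theorem compatibility_linear_system {n : ℕ} (U : Set (Fin n → ℝ)) (hU : IsOpen U)
    (c : (Fin n → ℝ) → Fin n → Fin n → Fin n → ℝ)
    (w : (Fin n → ℝ) → Matrix (Fin n) (Fin n) ℝ)
    (hc : ∀ s i j, ContDiffOn ℝ 1 (fun u => c u s i j) U)
    (hw : ∀ i j, ContDiffOn ℝ 2 (fun u => w u i j) U)
    (hlin : ∀ u ∈ U, ∀ i j l,
      pd l (fun x => w x i j) u = ∑ s, c u s i j * w u s l) :
    ∀ u ∈ U, ∀ i j k s,
      ∑ p, (pd k (fun x => c x p i j) u - ∑ q, c u q i j * c u p q k) * w u p s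
        = ∑ p, (pd s (fun x => c x p i j) u - ∑ q, c u q i j * c u p q s) * w u p k := by
  intro u hu i j k s
  have hU_nhds : U ∈ 𝓝 u := hU.mem_nhds hu
  have hcd := fun p i j => ((hc p i j).contDiffAt hU_nhds).differentiableAt one_ne_zero
  have hwd := fun i j => ((hw i j).contDiffAt hU_nhds).differentiableAt two_ne_zero
  have hlin_nhds := eventually_of_mem hU_nhds hlin
  have hmixed := pd_pd_comm ((hw i j).contDiffAt hU_nhds) k s
  rw [pd_pd_of_eventually_pd_eq hcd hwd hlin_nhds, pd_pd_of_eventually_pd_eq hcd hwd hlin_nhds]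
    at hmixed
  simp only [sub_mul, Finset.sum_sub_distrib, Finset.sum_mul]
  linarith
end
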